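/- arXiv:2103.05277 — 7 statements merged into one kernel-verified Lean document; each statement's English description precedes it below -/
import Mathlib

section
/- Let z ∈ R^K have strictly decreasing components z₁ > z₂ > … > z_K, and let x̂ = z/γ for γ > 0. The Euclidean projection of x̂ onto the probability simplex Δ is the vertex e₁ if and only if 0 < γ ≤ z₁ - z₂. -/
/-- Let `z` have strictly decreasing components and `x̂ = z / γ` with `γ > 0`.
The projection of `x̂` onto the probability simplex is the vertex `e₁`
iff `0 < γ ≤ z₁ - z₂`. -/
theorem stmt_4 {K : ℕ} (hK : 1 < K) (z : EuclideanSpace ℝ (Fin K))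
    (hz : StrictAnti z) (γ : ℝ) (hγ : 0 < γ)
    (xhat : EuclideanSpace ℝ (Fin K)) (hxhat : xhat = γ⁻¹ • z) :
    (∀ y ∈ {x : EuclideanSpace ℝ (Fin K) | (∀ k, 0 ≤ x k) ∧ ∑ k, x k = 1},
        ‖EuclideanSpace.single (⟨0, by omega⟩ : Fin K) (1 : ℝ) - xhat‖ ≤ ‖y - xhat‖) ↔
      γ ≤ z ⟨0, by omega⟩ - z ⟨1, hK⟩ := by
  subst hxhat
  have hK0 : 0 < K := by omega
  set i0 : Fin K := ⟨0, hK0⟩ with hi0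
  set i1 : Fin K := ⟨1, hK⟩ with hi1
  have hne : i0 ≠ i1 := by simp [hi0, hi1, Fin.ext_iff]
  set xh : EuclideanSpace ℝ (Fin K) := γ⁻¹ • z with hxh
  set e0 : EuclideanSpace ℝ (Fin K) := EuclideanSpace.single i0 (1 : ℝ) with he0
  have hxhk : ∀ k, xh k = γ⁻¹ * z k := fun k => rfl
  have expand : ∀ y : EuclideanSpace ℝ (Fin K),
      ‖y - xh‖ ^ 2 = ‖y - e0‖ ^ 2 + 2 * (inner ℝ (y - e0) (e0 - xh) : ℝ) + ‖e0 - xh‖ ^ 2 := by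
    intro y
    rw [← sub_add_sub_cancel y e0 xh, norm_add_sq_real]
  constructor
  · intro H
    by_contra hlt
    push_neg at hlt
    set d : EuclideanSpace ℝ (Fin K) := EuclideanSpace.single i1 (1 : ℝ) - e0 with hd
    have ha : (inner ℝ d (e0 - xh) : ℝ) = xh i0 - xh i1 - 1 := by
      rw [hd, inner_sub_left, EuclideanSpace.inner_single_left,
        he0, EuclideanSpace.inner_single_left]
      simp [PiLp.sub_apply, EuclideanSpace.single_apply, hne, hne.symm]
      ring
    set a : ℝ := xh i0 - xh i1 - 1 with haa
    have ha0 : a < 0 := by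
      have : xh i0 - xh i1 = γ⁻¹ * (z i0 - z i1) := by rw [hxhk, hxhk]; ring
      have h2 : γ⁻¹ * (z i0 - z i1) < γ⁻¹ * γ := by
        apply mul_lt_mul_of_pos_left hlt (by positivity)
      rw [inv_mul_cancel₀ hγ.ne'] at h2
      simp [haa, this]; linarith
    set t : ℝ := min (-a / 2) 1 with ht
    have ht0 : 0 < t := by
      apply lt_min (by linarith) one_pos
    have ht1 : t ≤ 1 := min_le_right _ _
    have hta : t ≤ -a / 2 := min_le_left _ _
    set y : EuclideanSpace ℝ (Fin K) := e0 + t • d with hy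
    have hymem : (∀ k, 0 ≤ y k) ∧ ∑ k, y k = 1 := by
      constructor
      · intro k
        have : y k = (if k = i0 then 1 else 0) + t * ((if k = i1 then 1 else 0) - (if k = i0 then 1 else 0)) := by
          simp [hy, hd, he0, EuclideanSpace.single_apply]
        rw [this]
        rcases eq_or_ne k i0 with h | h
        · simp [h, hne, hne.symm]; linarith
        · rcases eq_or_ne k i1 with h' | h'
          · simp [h, h', hne, hne.symm]; linarith
          · simp [h, h']
      · have : ∀ k, y k = (if k = i0 then 1 else 0) + t * ((if k = i1 then 1 else 0) - (if k = i0 then 1 else 0)) := by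
          intro k; simp [hy, hd, he0, EuclideanSpace.single_apply]
        simp only [this]
        rw [Finset.sum_add_distrib, ← Finset.mul_sum, Finset.sum_sub_distrib]
        simp
    have hH := H y hymem
    have hsq : ‖e0 - xh‖ ^ 2 ≤ ‖y - xh‖ ^ 2 := by
      apply pow_le_pow_left₀ (norm_nonneg _) hH _
    rw [expand y] at hsq
    have hye : y - e0 = t • d := by rw [hy]; abel
    have hdd : (inner ℝ d d : ℝ) = 2 := by
      rw [hd, inner_sub_left, inner_sub_right, inner_sub_right,
        EuclideanSpace.inner_single_left, EuclideanSpace.inner_single_left, he0]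
      simp [PiLp.sub_apply, EuclideanSpace.single_apply, hne, hne.symm]
      norm_num [EuclideanSpace.inner_single_left, EuclideanSpace.single_apply, hne]
    have hnorm : ‖y - e0‖ ^ 2 = 2 * t ^ 2 := by
      rw [← real_inner_self_eq_norm_sq, hye, real_inner_smul_left, real_inner_smul_right, hdd]
      ring
    have hinner : (inner ℝ (y - e0) (e0 - xh) : ℝ) = t * a := by
      rw [hye, real_inner_smul_left, ha]
    rw [hnorm, hinner] at hsq
    have : 0 ≤ 2 * t ^ 2 + 2 * (t * a) := by linarith
    nlinarith
  · intro hγz y hy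
    obtain ⟨hy0, hy1⟩ := hy
    have hgap : ∀ k : Fin K, k ≠ i0 → 1 ≤ xh i0 - xh k := by
      intro k hk
      have h1 : i1 ≤ k := by
        rw [Fin.le_def]
        have : (k : ℕ) ≠ 0 := fun h => hk (Fin.ext h)
        simp [hi1]; omega
      have h2 : z k ≤ z i1 := hz.antitone h1
      have h3 : γ ≤ z i0 - z k := by linarith
      have : xh i0 - xh k = γ⁻¹ * (z i0 - z k) := by rw [hxhk, hxhk]; ring
      rw [this]
      calc (1 : ℝ) = γ⁻¹ * γ := by rw [inv_mul_cancel₀ hγ.ne']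
        _ ≤ γ⁻¹ * (z i0 - z k) := by
            apply mul_le_mul_of_nonneg_left h3 (by positivity)
    have hsum0 : ∑ k, (y k - e0 k) = 0 := by
      rw [Finset.sum_sub_distrib, hy1]
      simp [he0, EuclideanSpace.single_apply]
    have hinner_nonneg : 0 ≤ (inner ℝ (y - e0) (e0 - xh) : ℝ) := by
      have hrw : (inner ℝ (y - e0) (e0 - xh) : ℝ) = ∑ k, (y k - e0 k) * (e0 k - xh k) := by
        rw [PiLp.inner_apply]
        simp [RCLike.inner_apply, PiLp.sub_apply]
        exact Finset.sum_congr rfl fun i _ => mul_comm _ _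
      rw [hrw]
      have key : (∑ k, (y k - e0 k) * (e0 k - xh k))
          = (∑ k, (y k - e0 k) * ((e0 k - xh k) - (1 - xh i0)))
            + (1 - xh i0) * ∑ k, (y k - e0 k) := by
        rw [Finset.mul_sum, ← Finset.sum_add_distrib]
        apply Finset.sum_congr rfl
        intro k _
        ring
      rw [key, hsum0, mul_zero, add_zero]
      apply Finset.sum_nonneg
      intro k _
      rcases eq_or_ne k i0 with h | h
      · subst h
        have h1 : e0 i0 = 1 := by simp [he0, EuclideanSpace.single_apply]
        rw [h1]
        simp
      · have he0k : e0 k = 0 := by simp [he0, EuclideanSpace.single_apply, h]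
        rw [he0k]
        have h1 : 1 ≤ xh i0 - xh k := hgap k h
        have h2 : 0 ≤ y k := hy0 k
        nlinarith
    have hsq : ‖e0 - xh‖ ^ 2 ≤ ‖y - xh‖ ^ 2 := by
      rw [expand y]
      nlinarith [sq_nonneg ‖y - e0‖]
    calc ‖e0 - xh‖ = √(‖e0 - xh‖ ^ 2) := by rw [Real.sqrt_sq (norm_nonneg _)]
      _ ≤ √(‖y - xh‖ ^ 2) := Real.sqrt_le_sqrt hsq
      _ = ‖y - xh‖ := Real.sqrt_sq (norm_nonneg _)
end

section
/- Let S ⊆ [K] be nonempty and x ∈ R^K defined by xᵣ = x̂ᵣ - θ for r ∈ S and xᵣ = 0 otherwise, where θ = (∑_{r∈S} x̂ᵣ - 1)/|S|. If x̂ᵣ - θ > 0 for all r ∈ S and x̂ₖ ≤ θ for all k ∉ S, then x is the Euclidean projection of x̂ onto the probability simplex Δ. -/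
open RealInnerProductSpace

/-- Correctness of the soft-thresholding formula for simplex projection. -/
theorem stmt_5 {K : ℕ} (xhat : EuclideanSpace ℝ (Fin K)) (S : Finset (Fin K))
    (hS : S.Nonempty) (θ : ℝ) (hθ : θ = ((∑ r ∈ S, xhat r) - 1) / S.card)
    (x : EuclideanSpace ℝ (Fin K))
    (hx : ∀ r, x r = if r ∈ S then xhat r - θ else 0)
    (hpos : ∀ r ∈ S, 0 < xhat r - θ)
    (hout : ∀ k ∉ S, xhat k ≤ θ) :
    x ∈ {y : EuclideanSpace ℝ (Fin K) | (∀ k, 0 ≤ y k) ∧ ∑ k, y k = 1} ∧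
      ∀ y ∈ {y : EuclideanSpace ℝ (Fin K) | (∀ k, 0 ≤ y k) ∧ ∑ k, y k = 1},
        ‖x - xhat‖ ≤ ‖y - xhat‖ := by
  have hcard : (S.card : ℝ) ≠ 0 := by
    exact_mod_cast (Finset.card_pos.mpr hS).ne'
  have hsumx : ∑ k, x k = 1 := by
    have h1 : ∑ k, x k = ∑ k ∈ S, (xhat k - θ) := by
      simp only [hx]
      rw [Finset.sum_ite_mem, Finset.univ_inter]
    rw [h1, Finset.sum_sub_distrib, Finset.sum_const, nsmul_eq_mul, hθ]
    field_simp
    ring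
  have hnonneg : ∀ k, 0 ≤ x k := by
    intro k
    rw [hx k]
    split
    · exact (hpos k ‹_›).le
    · exact le_refl 0
  refine ⟨⟨hnonneg, hsumx⟩, ?_⟩
  rintro y ⟨hy0, hy1⟩
  have key : (0:ℝ) ≤ ⟪y - x, x - xhat⟫ := by
    have hinner : ⟪y - x, x - xhat⟫ = ∑ k, (y k - x k) * (x k - xhat k) := by
      rw [PiLp.inner_apply]
      exact Finset.sum_congr rfl fun k _ => by
        simp [PiLp.sub_apply, RCLike.inner_apply, mul_comm]
    rw [hinner]
    have hge : ∀ k ∈ Finset.univ, (y k - x k) * (-θ) ≤ (y k - x k) * (x k - xhat k) := by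
      intro k _
      by_cases hk : k ∈ S
      · rw [hx k, if_pos hk]
        have : xhat k - θ - xhat k = -θ := by ring
        rw [this]
      · rw [hx k, if_neg hk]
        have h1 : (0:ℝ) ≤ y k - 0 := by simpa using hy0 k
        have h2 : -θ ≤ 0 - xhat k := by linarith [hout k hk]
        exact mul_le_mul_of_nonneg_left h2 h1
    calc (0:ℝ) = ∑ k, (y k - x k) * (-θ) := by
          rw [← Finset.sum_mul, Finset.sum_sub_distrib, hy1, hsumx]; ring
      _ ≤ _ := Finset.sum_le_sum hge
  have hsq : ‖x - xhat‖ ^ 2 ≤ ‖y - xhat‖ ^ 2 := by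
    have hdecomp : y - xhat = (y - x) + (x - xhat) := by abel
    rw [hdecomp, norm_add_sq_real]
    nlinarith [sq_nonneg ‖y - x‖]
  nlinarith [norm_nonneg (x - xhat), norm_nonneg (y - xhat)]
end

section
/- Let x̂ ∈ R^K and let x^box be the componentwise projection of x̂ onto [0,1]^K ∩ {x : x ≥ 0} (i.e., x^box_k = min(max(x̂ₖ,0),1)). If ∑ₖ x^box_k ≤ 1, then x^box is the Euclidean projection of x̂ onto the set {x ∈ R^K : x ≥ 0, ∑ₖ xₖ ≤ 1}. -/
lemma clip_dist_le (a b : ℝ) (hb0 : 0 ≤ b) (hb1 : b ≤ 1) :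
    |min (max a 0) 1 - a| ≤ |b - a| := by
  rcases le_total a 0 with h | h
  · rw [max_eq_right h, min_eq_left (by linarith), abs_of_nonneg (by linarith),
      abs_of_nonneg (by linarith)]
    linarith
  · rcases le_total a 1 with h1 | h1
    · rw [max_eq_left h, min_eq_left h1]; simp
    · rw [max_eq_left h, min_eq_right h1, abs_of_nonpos (by linarith),
        abs_of_nonpos (by linarith)]
      linarith

/-- If the box-clipped point has coordinate sum at most 1, it is the Euclidean
projection of `x̂` onto `{x : x ≥ 0, ∑ₖ xₖ ≤ 1}`. -/
theorem stmt_6 {K : ℕ} (xhat xbox : EuclideanSpace ℝ (Fin K))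
    (hbox : ∀ k, xbox k = min (max (xhat k) 0) 1)
    (hsum : ∑ k, xbox k ≤ 1) :
    xbox ∈ {x : EuclideanSpace ℝ (Fin K) | (∀ k, 0 ≤ x k) ∧ ∑ k, x k ≤ 1} ∧
      ∀ y ∈ {x : EuclideanSpace ℝ (Fin K) | (∀ k, 0 ≤ x k) ∧ ∑ k, x k ≤ 1},
        ‖xbox - xhat‖ ≤ ‖y - xhat‖ := by
  constructor
  · refine ⟨fun k => ?_, hsum⟩
    rw [hbox k]
    exact le_min (le_max_right _ _) zero_le_one
  · rintro y ⟨hy0, hy1⟩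
    have hyk : ∀ k, y k ≤ 1 := fun k =>
      le_trans (Finset.single_le_sum (fun i _ => hy0 i) (Finset.mem_univ k)) hy1
    rw [EuclideanSpace.norm_eq, EuclideanSpace.norm_eq]
    apply Real.sqrt_le_sqrt
    apply Finset.sum_le_sum
    intro k _
    have h1 : ‖(xbox - xhat) k‖ = |xbox k - xhat k| := by
      simp [PiLp.sub_apply]
    have h2 : ‖(y - xhat) k‖ = |y k - xhat k| := by
      simp [PiLp.sub_apply]
    rw [h1, h2]
    have := clip_dist_le (xhat k) (y k) (hy0 k) (hyk k)
    rw [hbox k]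
    nlinarith [abs_nonneg (min (max (xhat k) 0) 1 - xhat k), abs_nonneg (y k - xhat k)]
end

section
/- Let x̂ ∈ R^K with componentwise clipping x^box (to [0,1]) satisfying ∑ₖ x^box_k > 1. Then the Euclidean projection of x̂ onto {x ∈ [0,1]^K : ∑ₖ xₖ ≤ 1} equals the Euclidean projection of x̂ onto {x ∈ [0,1]^K : ∑ₖ xₖ = 1}. -/
private lemma clamp_dist_le (a c : ℝ) (h0 : 0 ≤ a) (h1 : a ≤ 1) :
    |min (max c 0) 1 - c| ≤ |a - c| := by
  rcases le_total c 0 with h | h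
  · rw [max_eq_right h, min_eq_left zero_le_one,
      abs_of_nonneg (by linarith), abs_of_nonneg (by linarith)]
    linarith
  rcases le_total 1 c with h' | h'
  · rw [max_eq_left (by linarith), min_eq_right h',
      abs_of_nonpos (by linarith), abs_of_nonpos (by linarith)]
    linarith
  · rw [max_eq_left h, min_eq_left h', sub_self, abs_zero]
    exact abs_nonneg _

private lemma enorm_le_of_abs_le {K : ℕ} {v w : EuclideanSpace ℝ (Fin K)}
    (h : ∀ k, |v k| ≤ |w k|) : ‖v‖ ≤ ‖w‖ := by
  rw [EuclideanSpace.norm_eq, EuclideanSpace.norm_eq]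
  apply Real.sqrt_le_sqrt
  apply Finset.sum_le_sum
  intro i _
  rw [Real.norm_eq_abs, Real.norm_eq_abs]
  exact pow_le_pow_left₀ (abs_nonneg _) (h i) 2

private lemma enorm_lt_of_abs_le {K : ℕ} {v w : EuclideanSpace ℝ (Fin K)}
    (h : ∀ k, |v k| ≤ |w k|) (j : Fin K) (hj : |v j| < |w j|) : ‖v‖ < ‖w‖ := by
  rw [EuclideanSpace.norm_eq, EuclideanSpace.norm_eq]
  apply Real.sqrt_lt_sqrt
  · exact Finset.sum_nonneg fun i _ => by positivity
  · refine Finset.sum_lt_sum (fun i _ => ?_) ⟨j, Finset.mem_univ j, ?_⟩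
    · rw [Real.norm_eq_abs, Real.norm_eq_abs]
      exact pow_le_pow_left₀ (abs_nonneg _) (h i) 2
    · rw [Real.norm_eq_abs, Real.norm_eq_abs]
      exact pow_lt_pow_left₀ hj (abs_nonneg _) two_ne_zero

/-- If the box-clipped point has coordinate sum greater than 1, the projection
of `x̂` onto `{x ∈ [0,1]^K : ∑ₖ xₖ ≤ 1}` equals the projection onto
`{x ∈ [0,1]^K : ∑ₖ xₖ = 1}`. -/
theorem stmt_7 {K : ℕ} (xhat xbox : EuclideanSpace ℝ (Fin K))
    (hbox : ∀ k, xbox k = min (max (xhat k) 0) 1)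
    (hsum : 1 < ∑ k, xbox k) :
    ∀ p : EuclideanSpace ℝ (Fin K),
      (p ∈ {x : EuclideanSpace ℝ (Fin K) | (∀ k, 0 ≤ x k ∧ x k ≤ 1) ∧ ∑ k, x k ≤ 1} ∧
        ∀ y ∈ {x : EuclideanSpace ℝ (Fin K) | (∀ k, 0 ≤ x k ∧ x k ≤ 1) ∧ ∑ k, x k ≤ 1},
          ‖p - xhat‖ ≤ ‖y - xhat‖) ↔
      (p ∈ {x : EuclideanSpace ℝ (Fin K) | (∀ k, 0 ≤ x k ∧ x k ≤ 1) ∧ ∑ k, x k = 1} ∧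
        ∀ y ∈ {x : EuclideanSpace ℝ (Fin K) | (∀ k, 0 ≤ x k ∧ x k ≤ 1) ∧ ∑ k, x k = 1},
          ‖p - xhat‖ ≤ ‖y - xhat‖) := by
  -- basic facts about xbox
  have hb0 : ∀ k, 0 ≤ xbox k := fun k => by
    rw [hbox k]; exact le_min (le_max_right _ _) zero_le_one
  have hb1 : ∀ k, xbox k ≤ 1 := fun k => by rw [hbox k]; exact min_le_right _ _
  -- key improvement lemma: any point of the ≤ set can be moved to the = set
  -- without increasing the distance to xhat
  have improve : ∀ y : EuclideanSpace ℝ (Fin K),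
      (∀ k, 0 ≤ y k ∧ y k ≤ 1) → ∑ k, y k ≤ 1 →
      ∃ y' : EuclideanSpace ℝ (Fin K), (∀ k, 0 ≤ y' k ∧ y' k ≤ 1) ∧
        (∑ k, y' k = 1) ∧ ‖y' - xhat‖ ≤ ‖y - xhat‖ := by
    intro y hy hys
    set s := ∑ k, y k with hs
    have hden : 0 < (∑ k, xbox k) - s := by linarith
    set t : ℝ := (1 - s) / ((∑ k, xbox k) - s) with ht
    have ht0 : 0 ≤ t := div_nonneg (by linarith) hden.le
    have ht1 : t ≤ 1 := (div_le_one hden).mpr (by linarith)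
    refine ⟨WithLp.toLp 2 (fun k => y k + t * (xbox k - y k) : Fin K → ℝ), ?_, ?_, ?_⟩
    · intro k
      have h1 := (hy k).1; have h2 := (hy k).2
      have hbk0 := hb0 k; have hbk1 := hb1 k
      dsimp only
      constructor
      · nlinarith [mul_nonneg ht0 hbk0, mul_nonneg (by linarith : (0:ℝ) ≤ 1 - t) h1]
      · nlinarith [mul_le_mul_of_nonneg_left hbk1 ht0,
          mul_le_mul_of_nonneg_left h2 (by linarith : (0:ℝ) ≤ 1 - t)]
    · show ∑ k, (y k + t * (xbox k - y k)) = 1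
      rw [Finset.sum_add_distrib, ← Finset.mul_sum, Finset.sum_sub_distrib, ← hs]
      rw [ht, div_mul_cancel₀ _ hden.ne']; ring
    · apply enorm_le_of_abs_le
      intro k
      show |y k + t * (xbox k - y k) - xhat k| ≤ |(y - xhat) k|
      have hkey : |xbox k - xhat k| ≤ |y k - xhat k| := by
        rw [hbox k]; exact clamp_dist_le _ _ (hy k).1 (hy k).2
      have : y k + t * (xbox k - y k) - xhat k
          = (1 - t) * (y k - xhat k) + t * (xbox k - xhat k) := by ring
      rw [this]
      calc |(1 - t) * (y k - xhat k) + t * (xbox k - xhat k)|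
          ≤ |(1 - t) * (y k - xhat k)| + |t * (xbox k - xhat k)| := abs_add_le _ _
        _ = (1 - t) * |y k - xhat k| + t * |xbox k - xhat k| := by
            rw [abs_mul, abs_mul, abs_of_nonneg (by linarith : (0:ℝ) ≤ 1 - t),
              abs_of_nonneg ht0]
        _ ≤ (1 - t) * |y k - xhat k| + t * |y k - xhat k| := by
            have := mul_le_mul_of_nonneg_left hkey ht0; linarith
        _ = |y k - xhat k| := by ring
        _ = |(y - xhat) k| := by simp
  intro p
  constructor
  · rintro ⟨⟨hpbox, hple⟩, hpmin⟩
    -- the minimizer over the ≤ set has sum exactly 1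
    have hpeq : ∑ k, p k = 1 := by
      by_contra hne
      have hlt : ∑ k, p k < 1 := lt_of_le_of_ne hple hne
      -- there is a coordinate with p k < xbox k
      have : ∃ k, p k < xbox k := by
        by_contra hc
        push_neg at hc
        have : ∑ k, xbox k ≤ ∑ k, p k := Finset.sum_le_sum fun k _ => hc k
        linarith
      obtain ⟨k, hk⟩ := this
      set ε : ℝ := min (xbox k - p k) (1 - ∑ j, p j) with hε
      have hε0 : 0 < ε := lt_min (by linarith) (by linarith)
      have hεb : ε ≤ xbox k - p k := min_le_left _ _
      have hεs : ε ≤ 1 - ∑ j, p j := min_le_right _ _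
      set q : EuclideanSpace ℝ (Fin K) := WithLp.toLp 2 (Function.update p k (p k + ε)) with hq
      have hqk : q k = p k + ε := Function.update_self _ _ _
      have hqj : ∀ j, j ≠ k → q j = p j := fun j hj => Function.update_of_ne hj _ _
      -- xbox k ≤ xhat k since xbox k > 0
      have hxk : xbox k ≤ xhat k := by
        have hpos : 0 < xbox k := lt_of_le_of_lt (hpbox k).1 hk
        rw [hbox k] at hpos ⊢
        rcases le_total (xhat k) 0 with h | h
        · rw [max_eq_right h] at hpos; simp at hpos
        · rw [max_eq_left h]; exact min_le_left _ _
      have hqsum : ∑ j, q j = (∑ j, p j) + ε := by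
        rw [hq, WithLp.ofLp_toLp, Finset.sum_update_of_mem (Finset.mem_univ k)]
        rw [← Finset.sum_erase_add Finset.univ p (Finset.mem_univ k), Finset.erase_eq]
        ring
      have hqmem : (∀ j, 0 ≤ q j ∧ q j ≤ 1) ∧ ∑ j, q j ≤ 1 := by
        constructor
        · intro j
          rcases eq_or_ne j k with rfl | hj
          · rw [hqk]
            exact ⟨by have := (hpbox j).1; linarith,
              by have := hb1 j; linarith⟩
          · rw [hqj j hj]; exact hpbox j
        · rw [hqsum]; linarith
      have hlt2 : ‖q - xhat‖ < ‖p - xhat‖ := by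
        apply enorm_lt_of_abs_le (j := k)
        · intro j
          rcases eq_or_ne j k with rfl | hj
          · show |q j - xhat j| ≤ |p j - xhat j|
            rw [hqk, abs_of_nonpos (by linarith), abs_of_nonpos (by linarith)]
            linarith
          · show |q j - xhat j| ≤ |p j - xhat j|
            rw [hqj j hj]
        · show |q k - xhat k| < |p k - xhat k|
          rw [hqk, abs_of_nonpos (by linarith), abs_of_nonpos (by linarith)]
          linarith
      exact absurd (hpmin q ⟨hqmem.1, hqmem.2⟩) (not_le.mpr hlt2)
    exact ⟨⟨hpbox, hpeq⟩, fun y hy => hpmin y ⟨hy.1, le_of_eq hy.2⟩⟩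
  · rintro ⟨⟨hpbox, hpeq⟩, hpmin⟩
    refine ⟨⟨hpbox, le_of_eq hpeq⟩, ?_⟩
    rintro y ⟨hybox, hyle⟩
    obtain ⟨y', hy'box, hy'sum, hy'le⟩ := improve y hybox hyle
    exact le_trans (hpmin y' ⟨hy'box, hy'sum⟩) hy'le
end

section
/- Let η ∈ R^K with all components nonzero and pairwise distinct, P = {i : ηᵢ > 0} with |P| odd. Let i₁ = argmin_{i∈P} ηᵢ and i₂ = argmax_{i∉P} ηᵢ (with i₂ defined only if P ≠ [K]). Then the maximizer of ηᵀv over binary vectors v with an even number of ones is: the indicator of P ∪ {i₂} if i₂ exists and η_{i₁} + η_{i₂} > 0, and the indicator of P \ {i₁} otherwise. -/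
open Finset

lemma stmt_12_core {K : ℕ} (η : Fin K → ℝ) (P S : Finset (Fin K))
    (hP : ∀ i, i ∈ P ↔ 0 < η i)
    (hPodd : Odd P.card) (hSeven : Even S.card)
    (i₁ : Fin K) (hi₁P : i₁ ∈ P) (hi₁min : ∀ i ∈ P, η i₁ ≤ η i)
    (m : ℝ) (hm1 : ∀ j, j ∉ P → η j ≤ m) (hm2 : -η i₁ ≤ m) :
    ∑ k ∈ S, η k ≤ ∑ k ∈ P, η k + m := by
  have hSP : S ≠ P := by
    rintro rfl
    exact (Nat.not_odd_iff_even.mpr hSeven) hPodd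
  have h1 : ∑ k ∈ S ∩ P, η k + ∑ k ∈ S \ P, η k = ∑ k ∈ S, η k :=
    Finset.sum_inter_add_sum_sdiff S P η
  have h2 : ∑ k ∈ P ∩ S, η k + ∑ k ∈ P \ S, η k = ∑ k ∈ P, η k :=
    Finset.sum_inter_add_sum_sdiff P S η
  rw [Finset.inter_comm] at h1
  have hposPS : 0 ≤ ∑ k ∈ P \ S, η k := by
    apply Finset.sum_nonneg
    intro i hi
    exact le_of_lt ((hP i).mp (Finset.mem_sdiff.mp hi).1)
  have key : ∑ k ∈ S \ P, η k ≤ ∑ k ∈ P \ S, η k + m := by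
    by_cases hne : (S \ P).Nonempty
    · obtain ⟨a, ha⟩ := hne
      have hnp : ∀ i ∈ (S \ P).erase a, η i ≤ 0 := by
        intro i hi
        have hi' := Finset.mem_sdiff.mp (Finset.mem_of_mem_erase hi)
        exact le_of_not_gt (fun h => hi'.2 ((hP i).mpr h))
      have hsum : η a + ∑ x ∈ (S \ P).erase a, η x = ∑ x ∈ S \ P, η x :=
        Finset.add_sum_erase _ η ha
      have hle : ∑ x ∈ (S \ P).erase a, η x ≤ 0 := Finset.sum_nonpos hnp
      have ham : η a ≤ m := hm1 a (Finset.mem_sdiff.mp ha).2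
      linarith
    · rw [Finset.not_nonempty_iff_eq_empty] at hne
      have hPS : (P \ S).Nonempty := by
        rcases Finset.eq_empty_or_nonempty (P \ S) with h | h
        · exfalso
          apply hSP
          exact Finset.Subset.antisymm (Finset.sdiff_eq_empty_iff_subset.mp hne)
            (Finset.sdiff_eq_empty_iff_subset.mp h)
        · exact h
      obtain ⟨a, ha⟩ := hPS
      have h3 : η a ≤ ∑ k ∈ P \ S, η k := by
        apply Finset.single_le_sum (fun i hi =>
          le_of_lt ((hP i).mp (Finset.mem_sdiff.mp hi).1)) ha
      have h4 : η i₁ ≤ η a := hi₁min a (Finset.mem_sdiff.mp ha).1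
      rw [hne, Finset.sum_empty]
      linarith
  linarith

/-- Odd-cardinality case of maximizing `ηᵀv` over binary vectors with an even
number of ones: with `P` the set of positive components, `i₁` the argmin of `η`
over `P`, and `i₂` the argmax of `η` outside `P` (when it exists), the maximizer
is the indicator of `P ∪ {i₂}` if `η i₁ + η i₂ > 0`, and the indicator of
`P \ {i₁}` otherwise (including when `P = [K]`). -/
theorem stmt_12 {K : ℕ} (η : Fin K → ℝ) (hnz : ∀ i, η i ≠ 0)
    (hinj : Function.Injective η)
    (P : Finset (Fin K)) (hP : P = Finset.univ.filter (fun i => 0 < η i))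
    (hPodd : Odd P.card)
    (i₁ : Fin K) (hi₁P : i₁ ∈ P) (hi₁min : ∀ i ∈ P, η i₁ ≤ η i) :
    (∀ i₂ : Fin K, i₂ ∉ P → (∀ j, j ∉ P → η j ≤ η i₂) → 0 < η i₁ + η i₂ →
      ∀ w : Fin K → ℝ, (∀ k, w k = 0 ∨ w k = 1) →
        Even (Finset.univ.filter (fun k => w k = 1)).card →
        ∑ k, η k * w k ≤ ∑ k, η k * (if k ∈ insert i₂ P then (1 : ℝ) else 0)) ∧
    ((∀ i₂ : Fin K, i₂ ∉ P → (∀ j, j ∉ P → η j ≤ η i₂) → η i₁ + η i₂ ≤ 0) →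
      ∀ w : Fin K → ℝ, (∀ k, w k = 0 ∨ w k = 1) →
        Even (Finset.univ.filter (fun k => w k = 1)).card →
        ∑ k, η k * w k ≤ ∑ k, η k * (if k ∈ P.erase i₁ then (1 : ℝ) else 0)) := by
  have hPmem : ∀ i, i ∈ P ↔ 0 < η i := by
    intro i; rw [hP]; simp
  have hwsum : ∀ w : Fin K → ℝ, (∀ k, w k = 0 ∨ w k = 1) →
      ∑ k, η k * w k = ∑ k ∈ Finset.univ.filter (fun k => w k = 1), η k := by
    intro w hw
    rw [Finset.sum_filter]
    apply Finset.sum_congr rfl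
    intro k _
    rcases hw k with h | h <;> simp [h]
  have hTsum : ∀ T : Finset (Fin K),
      ∑ k, η k * (if k ∈ T then (1 : ℝ) else 0) = ∑ k ∈ T, η k := by
    intro T
    simp [mul_ite, Finset.sum_ite_mem]
  constructor
  · intro i₂ hi₂ hi₂max hpos w hw heven
    rw [hwsum w hw, hTsum, Finset.sum_insert hi₂, add_comm]
    exact stmt_12_core η P _ hPmem hPodd heven i₁ hi₁P hi₁min (η i₂) hi₂max
      (by linarith)
  · intro hneg w hw heven
    rw [hwsum w hw, hTsum, Finset.sum_erase_eq_sub hi₁P]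
    have hm1 : ∀ j, j ∉ P → η j ≤ -η i₁ := by
      intro j hj
      have hne : (Pᶜ : Finset (Fin K)).Nonempty := ⟨j, Finset.mem_compl.mpr hj⟩
      obtain ⟨b, hb, hbmax⟩ := Finset.exists_max_image (Pᶜ) η hne
      have hbP : b ∉ P := Finset.mem_compl.mp hb
      have := hneg b hbP (fun j' hj' => hbmax j' (Finset.mem_compl.mpr hj'))
      have hjb : η j ≤ η b := hbmax j (Finset.mem_compl.mpr hj)
      linarith
    have := stmt_12_core η P _ hPmem hPodd heven i₁ hi₁P hi₁min (-η i₁) hm1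
      le_rfl
    linarith
end

section
/- Let V ⊂ R^n be finite, C = conv(V), x̂ ∈ R^n, and let x be the projection of x̂ onto the convex hull of a subset U ⊆ V. If there exists v ∈ V with (x - x̂)ᵀv < (x - x̂)ᵀx, then the projection x̃ of x̂ onto conv(U ∪ {v}) satisfies ‖x̃ - x̂‖² < ‖x - x̂‖². -/
open scoped RealInnerProductSpace

/-- Strict descent in Wolfe's algorithm: if the optimality condition fails for
some vertex `v ∈ V`, then the projection onto `conv (U ∪ {v})` is strictly
closer to `x̂`. -/
theorem stmt_15 {n : ℕ} (V U : Finset (EuclideanSpace ℝ (Fin n)))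
    (hUV : U ⊆ V) (xhat x xt v : EuclideanSpace ℝ (Fin n))
    (hxU : x ∈ convexHull ℝ (U : Set (EuclideanSpace ℝ (Fin n))))
    (hxmin : ∀ y ∈ convexHull ℝ (U : Set (EuclideanSpace ℝ (Fin n))),
      ‖x - xhat‖ ≤ ‖y - xhat‖)
    (hvV : v ∈ V) (hviol : ⟪x - xhat, v⟫ < ⟪x - xhat, x⟫)
    (hxtU : xt ∈ convexHull ℝ (insert v (U : Set (EuclideanSpace ℝ (Fin n)))))
    (hxtmin : ∀ y ∈ convexHull ℝ (insert v (U : Set (EuclideanSpace ℝ (Fin n)))),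
      ‖xt - xhat‖ ≤ ‖y - xhat‖) :
    ‖xt - xhat‖ ^ 2 < ‖x - xhat‖ ^ 2 := by
  set c : ℝ := ⟪x - xhat, v - x⟫ with hc
  have hcneg : c < 0 := by
    have : c = ⟪x - xhat, v⟫ - ⟪x - xhat, x⟫ := inner_sub_right _ _ _
    linarith [this, hviol]
  set d : ℝ := ‖v - x‖ ^ 2 with hd
  have hd0 : 0 ≤ d := by positivity
  set t : ℝ := min 1 (-c / (d + 1)) with ht
  have ht0 : 0 < t := by
    apply lt_min one_pos
    apply div_pos (by linarith) (by linarith)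
  have ht1 : t ≤ 1 := min_le_left _ _
  have htd : t * d ≤ -c := by
    calc t * d ≤ (-c / (d + 1)) * d := by
          apply mul_le_mul_of_nonneg_right (min_le_right _ _) hd0
      _ ≤ (-c / (d + 1)) * (d + 1) := by
          apply mul_le_mul_of_nonneg_left (by linarith)
          apply div_nonneg (by linarith) (by linarith)
      _ = -c := by field_simp
  set y : EuclideanSpace ℝ (Fin n) := x + t • (v - x) with hy
  have hymem : y ∈ convexHull ℝ (insert v (U : Set (EuclideanSpace ℝ (Fin n)))) := by
    have hconv : Convex ℝ (convexHull ℝ (insert v (U : Set (EuclideanSpace ℝ (Fin n))))) :=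
      convex_convexHull _ _
    have hxmem : x ∈ convexHull ℝ (insert v (U : Set (EuclideanSpace ℝ (Fin n)))) :=
      convexHull_mono (Set.subset_insert _ _) hxU
    have hvmem : v ∈ convexHull ℝ (insert v (U : Set (EuclideanSpace ℝ (Fin n)))) :=
      subset_convexHull _ _ (Set.mem_insert _ _)
    have := hconv hxmem hvmem (by linarith : (0:ℝ) ≤ 1 - t) (le_of_lt ht0) (by ring)
    convert this using 1
    simp [hy, smul_sub, sub_smul]
    module
  have hynorm : ‖y - xhat‖ ^ 2 = ‖x - xhat‖ ^ 2 + (2 * (t * c) + t ^ 2 * d) := by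
    have : y - xhat = (x - xhat) + t • (v - x) := by
      simp [hy]; abel
    rw [this, norm_add_sq_real, real_inner_smul_right, norm_smul,
      Real.norm_eq_abs, abs_of_pos ht0, ← hc]
    rw [mul_pow, ← hd]
    ring
  have hlt : ‖y - xhat‖ ^ 2 < ‖x - xhat‖ ^ 2 := by
    rw [hynorm]
    have h1 : 2 * (t * c) + t ^ 2 * d = t * (2 * c + t * d) := by ring
    have h2 : 2 * c + t * d < 0 := by linarith
    nlinarith
  have hle : ‖xt - xhat‖ ≤ ‖y - xhat‖ := hxtmin y hymem
  have h0 : (0:ℝ) ≤ ‖xt - xhat‖ := norm_nonneg _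
  nlinarith
end

section
/- Let x̂ ∈ R^K, let j = argmaxₖ x̂ₖ (assume the maximum is unique), and let x̂_{(2)} be the second largest component of x̂. If α := x̂_{(2)} - (1/2)(x̂_j + x̂_{(2)} - 1) ≤ 0, then e_j is the Euclidean projection of x̂ onto the probability simplex. -/
/-- First-iteration stopping correctness of the modified Duchi algorithm: if `j`
is the unique argmax of `x̂`, `s` realizes the second largest component, and
`α = x̂ s - (1/2)(x̂ j + x̂ s - 1) ≤ 0`, then `e_j` is the projection of `x̂`
onto the probability simplex. -/
theorem stmt_17 {K : ℕ} (xhat : EuclideanSpace ℝ (Fin K)) (j s : Fin K)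
    (hj : ∀ k, k ≠ j → xhat k < xhat j)
    (hs : s ≠ j) (hsmax : ∀ k, k ≠ j → xhat k ≤ xhat s)
    (α : ℝ) (hα : α = xhat s - (1 / 2) * (xhat j + xhat s - 1))
    (hα0 : α ≤ 0) :
    (EuclideanSpace.single j (1 : ℝ)) ∈
        {x : EuclideanSpace ℝ (Fin K) | (∀ k, 0 ≤ x k) ∧ ∑ k, x k = 1} ∧
      ∀ y ∈ {x : EuclideanSpace ℝ (Fin K) | (∀ k, 0 ≤ x k) ∧ ∑ k, x k = 1},
        ‖EuclideanSpace.single j (1 : ℝ) - xhat‖ ≤ ‖y - xhat‖ := by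
  have hxs : xhat s ≤ xhat j - 1 := by rw [hα] at hα0; linarith
  have hc : ∀ k, k ≠ j → xhat k ≤ xhat j - 1 := fun k hk => (hsmax k hk).trans hxs
  constructor
  · constructor
    · intro k
      simp only [EuclideanSpace.single_apply]
      split <;> norm_num
    · simp [EuclideanSpace.single_apply]
  · intro y hy
    obtain ⟨hy0, hy1⟩ := hy
    rw [EuclideanSpace.norm_eq, EuclideanSpace.norm_eq]
    apply Real.sqrt_le_sqrt
    simp only [PiLp.sub_apply, Real.norm_eq_abs, sq_abs, EuclideanSpace.single_apply]
    -- bound on the inner product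
    have h1 : ∑ k, y k * xhat k
        = y j * xhat j + ∑ k ∈ Finset.univ.erase j, y k * xhat k :=
      (Finset.add_sum_erase _ _ (Finset.mem_univ j)).symm
    have hsum_erase : ∑ k ∈ Finset.univ.erase j, y k = 1 - y j := by
      have h := Finset.add_sum_erase Finset.univ y (Finset.mem_univ j)
      rw [hy1] at h
      linarith
    have h2 : ∑ k ∈ Finset.univ.erase j, y k * xhat k
        ≤ (1 - y j) * (xhat j - 1) := by
      calc ∑ k ∈ Finset.univ.erase j, y k * xhat k
          ≤ ∑ k ∈ Finset.univ.erase j, y k * (xhat j - 1) :=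
            Finset.sum_le_sum fun k hk =>
              mul_le_mul_of_nonneg_left (hc k (Finset.ne_of_mem_erase hk)) (hy0 k)
        _ = (1 - y j) * (xhat j - 1) := by rw [← Finset.sum_mul, hsum_erase]
    have hT : ∑ k, y k * xhat k ≤ y j + xhat j - 1 := by
      rw [h1]; nlinarith [h2]
    -- rewrite both squared sums
    have hL : (∑ i, ((if i = j then (1:ℝ) else 0) - xhat i) ^ 2)
        = (∑ i, (xhat i) ^ 2) + (1 - 2 * xhat j) := by
      have : ∀ i : Fin K, ((if i = j then (1:ℝ) else 0) - xhat i) ^ 2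
          = (xhat i) ^ 2 + (if i = j then 1 - 2 * xhat j else 0) := by
        intro i
        by_cases h : i = j
        · subst h; simp; ring
        · simp [h]
      rw [Finset.sum_congr rfl fun i _ => this i, Finset.sum_add_distrib,
        Finset.sum_ite_eq' Finset.univ j (fun _ => 1 - 2 * xhat j)]
      simp
    have hR : (∑ i, (y i - xhat i) ^ 2)
        = (∑ i, (y i) ^ 2) - 2 * (∑ k, y k * xhat k) + ∑ i, (xhat i) ^ 2 := by
      have h4 : ∀ i : Fin K, (y i - xhat i) ^ 2
          = y i ^ 2 - 2 * (y i * xhat i) + xhat i ^ 2 := fun i => by ring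
      rw [Finset.sum_congr rfl fun i _ => h4 i, Finset.sum_add_distrib,
        Finset.sum_sub_distrib, ← Finset.mul_sum]
    have hyj2 : y j ^ 2 ≤ ∑ i, (y i) ^ 2 :=
      Finset.single_le_sum (fun i _ => sq_nonneg (y i)) (Finset.mem_univ j)
    rw [hL, hR]
    nlinarith [sq_nonneg (y j - 1)]
end
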